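/- Let n ≥ 1, let p_1,…,p_n : ℝ → ℝ be continuous, fix s ∈ [a,b] and λ ∈ ℝ with λ ≠ 0, and consider the polynomial-type kernel K(t,σ) = Σ_{i=0}^{n-1} p_{n-i}(t) (t-σ)^{n-i-1}/(n-i-1)! with resolvent kernel Γ(λ;t,σ) = Σ_{ℓ=0}^∞ K_ℓ(t,σ) λ^ℓ. If y : ℝ → ℝ is n times continuously differentiable on [s,b] and satisfies y^{(n)}(t) - λ Σ_{i=0}^{n-1} p_{n-i}(t) y^{(i)}(t) = 0 on [s,b] with initial conditions y^{(i)}(s) = δ_{i,n-1} (Kronecker delta) for i = 0,…,n-1, then Γ(λ;t,s) = (1/λ) y^{(n)}(t) for all t ∈ [s,b]. -/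

import Mathlib

open MeasureTheory intervalIntegral Set

/-- The iterated kernels: `K₀ = K` and `Kₙ(t,s) = ∫_s^t K(t,η) K_{n-1}(η,s) dη` for `n ≥ 1`. -/
noncomputable def iterK (K : ℝ → ℝ → ℝ) : ℕ → ℝ → ℝ → ℝ
  | 0 => K
  | n + 1 => fun t s => ∫ η in s..t, K t η * iterK K n η s

/-- The resolvent kernel `Γ(λ;t,s) = Σ_{ℓ=0}^∞ K_ℓ(t,s) λ^ℓ`. -/
noncomputable def resolventKer (K : ℝ → ℝ → ℝ) (lam t s : ℝ) : ℝ :=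
  ∑' ℓ : ℕ, iterK K ℓ t s * lam ^ ℓ

/-- The polynomial-type kernel `K(t,σ) = Σ_{i=0}^{n-1} p_{n-i}(t) (t-σ)^{n-i-1}/(n-i-1)!`. -/
noncomputable def polyKernel (n : ℕ) (p : ℕ → ℝ → ℝ) (t σ : ℝ) : ℝ :=
  ∑ i ∈ Finset.range n, p (n - i) t * (t - σ) ^ (n - i - 1) / (n - i - 1).factorial

/-!
Taylor's formula with integral remainder and the initial data `y⁽ⁱ⁾(s) = δ_{i,n-1}` give
`y⁽ⁱ⁾(t) = (t-s)^{n-i-1}/(n-i-1)! + ∫_s^t (t-η)^{n-i-1}/(n-i-1)! y⁽ⁿ⁾(η) dη`, so the ODE becomes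
the Volterra equation `g(t) = K(t,s) + λ ∫_s^t K(t,η) g(η) dη` for `g = y⁽ⁿ⁾/λ`. The Neumann
series of a continuous solution of such an equation converges to it: the remainders
`g - Σ_{ℓ<m} K_ℓ λ^ℓ` are Picard iterates of the Volterra operator, hence bounded by
`C (|λ| M (t-s))^m / m!` where `M` bounds `K` and `C` bounds `g`.
-/

section Volterra

variable {K : ℝ → ℝ → ℝ} {s b lam : ℝ}

lemma continuous_iterK (hK : Continuous (Function.uncurry K)) (s : ℝ) (ℓ : ℕ) :
    Continuous fun t => iterK K ℓ t s := by
  induction ℓ with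
  | zero => exact hK.comp (continuous_id.prodMk continuous_const)
  | succ ℓ ih =>
    exact continuous_parametric_intervalIntegral_of_continuous
      (hK.mul (ih.comp continuous_snd)) continuous_id

lemma integral_sub_pow_div_factorial (C : ℝ) (m : ℕ) (t : ℝ) :
    ∫ η in s..t, C * (η - s) ^ m / m.factorial = C * (t - s) ^ (m + 1) / (m + 1).factorial := by
  simp only [div_eq_mul_inv _ (m.factorial : ℝ), intervalIntegral.integral_mul_const,
    intervalIntegral.integral_const_mul, intervalIntegral.integral_comp_sub_right (· ^ m),
    integral_pow, sub_self, Nat.factorial_succ]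
  push_cast
  field_simp
  simp

lemma abs_le_of_volterra_iterate {M C : ℝ} (hK : ∀ t ∈ Icc s b, ∀ η ∈ Icc s b, |K t η| ≤ M)
    {f : ℕ → ℝ → ℝ} (h0 : ∀ t ∈ Icc s b, |f 0 t| ≤ C)
    (hrec : ∀ m, ∀ t ∈ Icc s b, f (m + 1) t = lam * ∫ η in s..t, K t η * f m η)
    (m : ℕ) {t : ℝ} (ht : t ∈ Icc s b) :
    |f m t| ≤ C * ((|lam| * M * (t - s)) ^ m / m.factorial) := by
  induction m generalizing t with
  | zero => simpa using h0 t ht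
  | succ m ih =>
    have hM : 0 ≤ M := (abs_nonneg _).trans (hK t ht t ht)
    have hpt : ∀ᵐ η, η ∈ Ioc s t →
        ‖K t η * f m η‖ ≤ M * (C * (|lam| * M) ^ m) * (η - s) ^ m / m.factorial := by
      refine Filter.Eventually.of_forall fun η hη => ?_
      have hηb : η ∈ Icc s b := ⟨hη.1.le, hη.2.trans ht.2⟩
      rw [Real.norm_eq_abs, abs_mul]
      calc |K t η| * |f m η| ≤ M * (C * ((|lam| * M * (η - s)) ^ m / m.factorial)) :=
            mul_le_mul (hK t ht η hηb) (ih hηb) (abs_nonneg _) hM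
        _ = _ := by simp only [mul_pow]; ring
    have hint := intervalIntegral.norm_integral_le_of_norm_le ht.1 hpt
      (Continuous.intervalIntegrable (by fun_prop) _ _)
    rw [integral_sub_pow_div_factorial, Real.norm_eq_abs] at hint
    rw [hrec m t ht, abs_mul]
    calc |lam| * |∫ η in s..t, K t η * f m η|
        ≤ |lam| * (M * (C * (|lam| * M) ^ m) * (t - s) ^ (m + 1) / (m + 1).factorial) :=
          mul_le_mul_of_nonneg_left hint (abs_nonneg lam)
      _ = _ := by simp only [mul_pow]; ring

lemma volterra_sub_sum_iterK_succ (hK : Continuous (Function.uncurry K)) {g : ℝ → ℝ}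
    (hg : ContinuousOn g (Icc s b))
    (hvol : ∀ t ∈ Icc s b, g t = K t s + lam * ∫ η in s..t, K t η * g η)
    (m : ℕ) {t : ℝ} (ht : t ∈ Icc s b) :
    g t - ∑ ℓ ∈ Finset.range (m + 1), iterK K ℓ t s * lam ^ ℓ =
      lam * ∫ η in s..t, K t η * (g η - ∑ ℓ ∈ Finset.range m, iterK K ℓ η s * lam ^ ℓ) := by
  have hKt : Continuous (K t) := hK.comp (continuous_const.prodMk continuous_id)
  have hgK : IntervalIntegrable (fun η => K t η * g η) volume s t :=
    (hKt.continuousOn.mul (hg.mono (Icc_subset_Icc le_rfl ht.2))).intervalIntegrable_of_Icc ht.1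
  have hiterK (ℓ : ℕ) : Continuous fun η => iterK K ℓ η s := continuous_iterK hK s ℓ
  have hsum : Continuous fun η => K t η * ∑ ℓ ∈ Finset.range m, iterK K ℓ η s * lam ^ ℓ := by
    fun_prop
  have hstep (ℓ : ℕ) : lam * ∫ η in s..t, K t η * (iterK K ℓ η s * lam ^ ℓ) =
      iterK K (ℓ + 1) t s * lam ^ (ℓ + 1) := by
    rw [iterK, ← intervalIntegral.integral_const_mul, ← intervalIntegral.integral_mul_const]
    congr 1 with η
    ring
  simp_rw [mul_sub]
  rw [intervalIntegral.integral_sub hgK (hsum.intervalIntegrable _ _)]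
  simp_rw [Finset.mul_sum]
  rw [intervalIntegral.integral_finsetSum fun ℓ _ =>
      (by fun_prop : Continuous fun η => K t η * (iterK K ℓ η s * lam ^ ℓ)).intervalIntegrable _ _,
    mul_sub, Finset.mul_sum, Finset.sum_range_succ', hvol t ht]
  simp only [hstep, iterK, pow_zero, mul_one]
  ring

theorem hasSum_iterK_of_volterra (hK : Continuous (Function.uncurry K)) {g : ℝ → ℝ}
    (hg : ContinuousOn g (Icc s b))
    (hvol : ∀ t ∈ Icc s b, g t = K t s + lam * ∫ η in s..t, K t η * g η)
    {t : ℝ} (ht : t ∈ Icc s b) :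
    HasSum (fun ℓ => iterK K ℓ t s * lam ^ ℓ) (g t) := by
  obtain ⟨M, hM⟩ := (isCompact_Icc.prod isCompact_Icc).exists_bound_of_continuousOn
    (hK.continuousOn (s := Icc s b ×ˢ Icc s b))
  obtain ⟨C, hC⟩ := isCompact_Icc.exists_bound_of_continuousOn hg
  have hKM : ∀ t ∈ Icc s b, ∀ η ∈ Icc s b, |K t η| ≤ M := fun t ht η hη => hM (t, η) ⟨ht, hη⟩
  set x := |lam| * M * (t - s)
  have hterm (ℓ : ℕ) : ‖iterK K ℓ t s * lam ^ ℓ‖ ≤ M * (x ^ ℓ / ℓ.factorial) := by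
    refine abs_le_of_volterra_iterate hKM (f := fun ℓ u => iterK K ℓ u s * lam ^ ℓ)
      (fun u hu => ?_) (fun m u hu => ?_) ℓ ht
    · simpa [iterK] using hKM u hu s ⟨le_rfl, ht.1.trans ht.2⟩
    · rw [iterK, ← intervalIntegral.integral_mul_const, ← intervalIntegral.integral_const_mul]
      congr 1 with η
      ring
  have hrem (m : ℕ) : |g t - ∑ ℓ ∈ Finset.range m, iterK K ℓ t s * lam ^ ℓ| ≤
      C * (x ^ m / m.factorial) :=
    abs_le_of_volterra_iterate hKM
      (f := fun m u => g u - ∑ ℓ ∈ Finset.range m, iterK K ℓ u s * lam ^ ℓ)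
      (fun u hu => by simpa using hC u hu)
      (fun m u hu => volterra_sub_sum_iterK_succ hK hg hvol m hu) m ht
  refine (hasSum_iff_tendsto_nat_of_summable_norm ?_).2 ?_
  · exact .of_nonneg_of_le (fun _ => norm_nonneg _) hterm
      ((Real.summable_pow_div_factorial x).mul_left M)
  · refine tendsto_iff_norm_sub_tendsto_zero.2 (squeeze_zero (fun _ => norm_nonneg _)
      (fun m => ?_) (by simpa using (FloorSemiring.tendsto_pow_div_factorial_atTop x).const_mul C))
    rw [norm_sub_rev]
    exact hrem m

end Volterra

section IteratedDeriv

variable {𝕜 F : Type*} [NontriviallyNormedField 𝕜] [NormedAddCommGroup F] [NormedSpace 𝕜 F]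
  {f : 𝕜 → F} {S T : Set 𝕜}

lemma ContDiffOn.contDiffOn_iteratedDerivWithin {i k : ℕ} (hf : ContDiffOn 𝕜 (i + k : ℕ) f S)
    (hS : UniqueDiffOn 𝕜 S) : ContDiffOn 𝕜 k (iteratedDerivWithin i f S) S := by
  induction i generalizing k with
  | zero => simpa using hf
  | succ i ih =>
    rw [iteratedDerivWithin_succ]
    exact (ih (k := k + 1) (by rwa [Nat.add_assoc, Nat.add_comm 1] at hf)).derivWithin hS le_rfl

lemma iteratedDerivWithin_iteratedDerivWithin_of_subset {i k : ℕ}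
    (hf : ContDiffOn 𝕜 (i + k : ℕ) f S) (hS : UniqueDiffOn 𝕜 S) (hT : UniqueDiffOn 𝕜 T)
    (hTS : T ⊆ S) {x : 𝕜} (hx : x ∈ T) :
    iteratedDerivWithin k (iteratedDerivWithin i f S) T x = iteratedDerivWithin (i + k) f S x := by
  have hiter : iteratedDerivWithin i f S = (fun g : 𝕜 → F => derivWithin g S)^[i] f :=
    funext fun _ => iteratedDerivWithin_eq_iterate
  rw [iteratedDerivWithin_eq_iteratedFDerivWithin, iteratedFDerivWithin_subset hTS hT hS
      (hf.contDiffOn_iteratedDerivWithin hS) hx, ← iteratedDerivWithin_eq_iteratedFDerivWithin,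
    iteratedDerivWithin_eq_iterate, iteratedDerivWithin_eq_iterate, hiter, add_comm,
    Function.iterate_add_apply]

end IteratedDeriv

lemma ContDiffOn.continuousOn_iteratedDerivWithin_Icc {y : ℝ → ℝ} {s b : ℝ} {n : ℕ}
    (hy : ContDiffOn ℝ n y (Icc s b)) :
    ContinuousOn (iteratedDerivWithin n y (Icc s b)) (Icc s b) := by
  rcases lt_or_ge s b with hsb | hbs
  · exact hy.continuousOn_iteratedDerivWithin le_rfl (uniqueDiffOn_Icc hsb)
  · exact (subsingleton_Icc_of_ge hbs).continuousOn _

lemma iteratedDerivWithin_eq_taylor_add_integral {y : ℝ → ℝ} {s b u : ℝ} {i m : ℕ}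
    (hy : ContDiffOn ℝ (i + m + 1 : ℕ) y (Icc s b)) (hu : u ∈ Icc s b) :
    iteratedDerivWithin i y (Icc s b) u =
      ∑ k ∈ Finset.range (m + 1),
          (k.factorial : ℝ)⁻¹ * (u - s) ^ k * iteratedDerivWithin (i + k) y (Icc s b) s
        + ∫ η in s..u,
            (u - η) ^ m / m.factorial * iteratedDerivWithin (i + m + 1) y (Icc s b) η := by
  rcases hu.1.eq_or_lt with rfl | hsu
  · simp [Finset.sum_range_succ']
  have hS : UniqueDiffOn ℝ (Icc s b) := uniqueDiffOn_Icc (hsu.trans_le hu.2)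
  have hTS : Icc s u ⊆ Icc s b := Icc_subset_Icc le_rfl hu.2
  have hderiv (k : ℕ) (hk : k ≤ m + 1) {x : ℝ} (hx : x ∈ Icc s u) :
      iteratedDerivWithin k (iteratedDerivWithin i y (Icc s b)) (Icc s u) x =
        iteratedDerivWithin (i + k) y (Icc s b) x :=
    iteratedDerivWithin_iteratedDerivWithin_of_subset (hy.of_le (by norm_cast; omega)) hS
      (uniqueDiffOn_Icc hsu) hTS hx
  have htaylor := taylor_integral_remainder (x₀ := s) (x := u) (n := m)
    (f := iteratedDerivWithin i y (Icc s b)) <| by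
      rw [uIcc_of_le hsu.le]
      exact (hy.contDiffOn_iteratedDerivWithin (k := m + 1) hS).mono hTS
  rw [uIcc_of_le hsu.le, taylor_within_apply, sub_eq_iff_eq_add'] at htaylor
  rw [htaylor]
  congr 1
  · refine Finset.sum_congr rfl fun k hk => ?_
    rw [smul_eq_mul, hderiv k (by rw [Finset.mem_range] at hk; omega) (left_mem_Icc.2 hsu.le)]
  · refine intervalIntegral.integral_congr fun η hη => ?_
    rw [uIcc_of_le hsu.le] at hη
    rw [smul_eq_mul, hderiv (m + 1) le_rfl hη, add_assoc]

section KroneckerInit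

variable {y : ℝ → ℝ} {s b u : ℝ} {n : ℕ}

lemma iteratedDerivWithin_eq_of_kronecker_init (hy : ContDiffOn ℝ n y (Icc s b))
    (hinit : ∀ i < n, iteratedDerivWithin i y (Icc s b) s = if i = n - 1 then 1 else 0)
    {i : ℕ} (hi : i < n) (hu : u ∈ Icc s b) :
    iteratedDerivWithin i y (Icc s b) u = (u - s) ^ (n - i - 1) / (n - i - 1).factorial
      + ∫ η in s..u, (u - η) ^ (n - i - 1) / (n - i - 1).factorial *
          iteratedDerivWithin n y (Icc s b) η := by
  obtain ⟨m, rfl⟩ : ∃ m, n = i + m + 1 := ⟨n - i - 1, by omega⟩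
  rw [iteratedDerivWithin_eq_taylor_add_integral hy hu, show i + m + 1 - i - 1 = m by omega,
    Finset.sum_eq_single_of_mem m (by simp), hinit _ (by omega), if_pos (by omega), mul_one,
    inv_mul_eq_div]
  intro k hk hkm
  rw [hinit _ (by rw [Finset.mem_range] at hk; omega), if_neg (by omega), mul_zero]

lemma sum_mul_iteratedDerivWithin_eq_polyKernel (p : ℕ → ℝ → ℝ) (hy : ContDiffOn ℝ n y (Icc s b))
    (hinit : ∀ i < n, iteratedDerivWithin i y (Icc s b) s = if i = n - 1 then 1 else 0)
    (hu : u ∈ Icc s b) :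
    ∑ i ∈ Finset.range n, p (n - i) u * iteratedDerivWithin i y (Icc s b) u =
      polyKernel n p u s +
        ∫ η in s..u, polyKernel n p u η * iteratedDerivWithin n y (Icc s b) η := by
  have hDn : IntervalIntegrable (iteratedDerivWithin n y (Icc s b)) volume s u :=
    (hy.continuousOn_iteratedDerivWithin_Icc.mono
      (Icc_subset_Icc le_rfl hu.2)).intervalIntegrable_of_Icc hu.1
  have hint (i : ℕ) : IntervalIntegrable (fun η => p (n - i) u * ((u - η) ^ (n - i - 1) /
      (n - i - 1).factorial * iteratedDerivWithin n y (Icc s b) η)) volume s u :=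
    (hDn.continuousOn_mul (by fun_prop)).const_mul _
  rw [Finset.sum_congr rfl fun i hi => by
    rw [iteratedDerivWithin_eq_of_kronecker_init hy hinit (Finset.mem_range.1 hi) hu, mul_add,
      ← intervalIntegral.integral_const_mul],
    Finset.sum_add_distrib, ← intervalIntegral.integral_finsetSum fun i _ => hint i]
  simp only [polyKernel, Finset.sum_mul, mul_div_assoc]
  congr 1
  refine intervalIntegral.integral_congr fun η _ => Finset.sum_congr rfl fun i _ => ?_
  ring

end KroneckerInit

theorem resolventKer_of_polyKernel
    (b : ℝ) (n : ℕ)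
    (p : ℕ → ℝ → ℝ) (hp : ∀ i, Continuous (p i))
    (s : ℝ)
    (lam : ℝ) (hlam : lam ≠ 0)
    (y : ℝ → ℝ) (hy : ContDiffOn ℝ n y (Set.Icc s b))
    (hode : ∀ t ∈ Set.Icc s b,
      iteratedDerivWithin n y (Set.Icc s b) t -
        lam * ∑ i ∈ Finset.range n, p (n - i) t * iteratedDerivWithin i y (Set.Icc s b) t
        = 0)
    (hinit : ∀ i < n,
      iteratedDerivWithin i y (Set.Icc s b) s = if i = n - 1 then 1 else 0) :
    ∀ t ∈ Set.Icc s b,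
      resolventKer (polyKernel n p) lam t s =
        (1 / lam) * iteratedDerivWithin n y (Set.Icc s b) t := by
  have hK : Continuous (Function.uncurry (polyKernel n p)) := by
    unfold polyKernel
    fun_prop
  have hvol (u : ℝ) (hu : u ∈ Icc s b) :
      (1 / lam) * iteratedDerivWithin n y (Icc s b) u = polyKernel n p u s + lam *
        ∫ η in s..u, polyKernel n p u η * ((1 / lam) * iteratedDerivWithin n y (Icc s b) η) := by
    simp_rw [mul_left_comm (polyKernel n p u _) (1 / lam), intervalIntegral.integral_const_mul]
    rw [sub_eq_zero.1 (hode u hu), sum_mul_iteratedDerivWithin_eq_polyKernel p hy hinit hu]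
    field_simp
  intro t ht
  exact (hasSum_iterK_of_volterra hK
    (continuousOn_const.mul hy.continuousOn_iteratedDerivWithin_Icc) hvol ht).tsum_eq
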